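/- For all real numbers x ≥ 0 and y ≥ 0 one has f(x,y) = Φ̄(x−y) − e^{2xy}·Φ̄(x+y) ≤ 2·y·φ(max(x−y, 0)). -/
import Mathlib

open Real Filter MeasureTheory

/-- Standard normal density. -/
noncomputable def stdPhi (u : ℝ) : ℝ := (Real.sqrt (2 * Real.pi))⁻¹ * Real.exp (-u ^ 2 / 2)
/-- Standard normal distribution function. -/
noncomputable def stdCdf (u : ℝ) : ℝ := ∫ s in Set.Iic u, stdPhi s
/-- Standard normal survivor function. -/
noncomputable def stdSurv (u : ℝ) : ℝ := 1 - stdCdf u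
noncomputable def fFun (x y : ℝ) : ℝ := stdSurv (x - y) - Real.exp (2 * x * y) * stdSurv (x + y)
noncomputable def gFun (x y : ℝ) : ℝ := 1 - x * stdSurv (x + y) / stdPhi (x + y)

lemma stdPhi_nonneg (u : ℝ) : 0 ≤ stdPhi u := by unfold stdPhi; positivity

lemma stdPhi_eq : stdPhi = fun u => (Real.sqrt (2 * Real.pi))⁻¹ * Real.exp (-(1/2) * u ^ 2) := by
  funext u; unfold stdPhi; ring_nf

lemma stdPhi_integrable : Integrable stdPhi := by
  rw [stdPhi_eq]
  exact (integrable_exp_neg_mul_sq (by norm_num)).const_mul _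

lemma stdPhi_integral : ∫ u, stdPhi u = 1 := by
  rw [stdPhi_eq]
  rw [integral_const_mul, integral_gaussian]
  have : Real.sqrt (π / (1/2)) = Real.sqrt (2 * π) := by norm_num; ring_nf
  rw [this, inv_mul_cancel₀]
  positivity

lemma stdCdf_le_one (u : ℝ) : stdCdf u ≤ 1 := by
  rw [← stdPhi_integral]
  exact setIntegral_le_integral stdPhi_integrable
    (Filter.Eventually.of_forall stdPhi_nonneg)

lemma stdPhi_le (m s : ℝ) (h : m ^ 2 ≤ s ^ 2) : stdPhi s ≤ stdPhi m := by
  unfold stdPhi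
  apply mul_le_mul_of_nonneg_left _ (by positivity)
  apply Real.exp_le_exp.mpr
  linarith

/-- Upper bound f(x,y) ≤ 2y·φ((x−y)₊) for x, y ≥ 0. -/
theorem fFun_le (x y : ℝ) (hx : 0 ≤ x) (hy : 0 ≤ y) :
    fFun x y ≤ 2 * y * stdPhi (max (x - y) 0) := by
  set m := max (x - y) 0 with hm
  have hsurv : 0 ≤ stdSurv (x + y) := by
    have := stdCdf_le_one (x + y); unfold stdSurv; linarith
  have hexp : (1:ℝ) ≤ Real.exp (2 * x * y) := by
    rw [Real.one_le_exp_iff]; positivity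
  have hsurv' : 0 ≤ 1 - stdCdf (x + y) := hsurv
  have h1 : fFun x y ≤ stdCdf (x + y) - stdCdf (x - y) := by
    unfold fFun stdSurv
    nlinarith [mul_nonneg (sub_nonneg.mpr hexp) hsurv']
  have hle : x - y ≤ x + y := by linarith
  have h2 : stdCdf (x + y) - stdCdf (x - y) = ∫ s in (x-y)..(x+y), stdPhi s := by
    unfold stdCdf
    exact intervalIntegral.integral_Iic_sub_Iic stdPhi_integrable.integrableOn
      stdPhi_integrable.integrableOn
  have h3 : ∫ s in (x-y)..(x+y), stdPhi s ≤ ∫ s in (x-y)..(x+y), stdPhi m := by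
    apply intervalIntegral.integral_mono_on hle stdPhi_integrable.intervalIntegrable
      intervalIntegrable_const
    intro s hs
    apply stdPhi_le
    rcases le_or_gt 0 (x - y) with h | h
    · have hm' : m = x - y := max_eq_left h
      rw [hm']
      nlinarith [hs.1, hs.2]
    · have hm' : m = 0 := max_eq_right h.le
      rw [hm']; simpa using sq_nonneg s
  have h4 : ∫ s in (x-y)..(x+y), stdPhi m = 2 * y * stdPhi m := by
    rw [intervalIntegral.integral_const, smul_eq_mul]
    ring
  linarith [h1, h2 ▸ h1, h3, h4 ▸ h3]
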